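/- Let ν be a probability measure on SL(2,ℝ) and let G_ν be the smallest closed subgroup of SL(2,ℝ) containing supp ν. Assume there is no finite non-empty subset L of ℙ¹(ℝ) such that M·L = L for all M ∈ G_ν. Then every ν-invariant probability measure m on ℙ¹(ℝ) is non-atomic, i.e. m({v}) = 0 for every v ∈ ℙ¹(ℝ). -/

import Mathlib

open MeasureTheory Filter

noncomputable section

/-- The group `SL(2,ℝ)`. -/
abbrev SL2 := Matrix.SpecialLinearGroup (Fin 2) ℝ

instance : TopologicalSpace SL2 := instTopologicalSpaceSubtype
instance : MeasurableSpace SL2 := borel SL2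

/-- The real projective line `ℙ¹(ℝ)`, the projectivization of `ℝ² \ {0}`. -/
abbrev P1 := Projectivization ℝ (EuclideanSpace ℝ (Fin 2))

instance : TopologicalSpace P1 := instTopologicalSpaceQuotient
instance : MeasurableSpace P1 := borel P1

lemma sl2_inj (M : SL2) :
    Function.Injective (Matrix.toEuclideanCLM (𝕜 := ℝ) (M : Matrix (Fin 2) (Fin 2) ℝ)) := by
  intro x y h
  have h2 := congrArg (fun v => Matrix.toEuclideanCLM (𝕜 := ℝ)
    ((M⁻¹ : SL2) : Matrix (Fin 2) (Fin 2) ℝ) v) h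
  simpa [← ContinuousLinearMap.comp_apply, ← ContinuousLinearMap.mul_def, ← map_mul,
    Matrix.SpecialLinearGroup.coe_inv, Matrix.adjugate_mul, M.prop, one_smul] using h2

/-- The induced action of `M ∈ SL(2,ℝ)` on the real projective line. -/
def projAct (M : SL2) (x : P1) : P1 :=
  Projectivization.map
    ((Matrix.toEuclideanCLM (𝕜 := ℝ) (M : Matrix (Fin 2) (Fin 2) ℝ)) : _ →ₗ[ℝ] _)
    (sl2_inj M) x

/-- The topological support of a measure. -/
def msupp {X : Type*} [TopologicalSpace X] [MeasurableSpace X] (ν : Measure X) : Set X :=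
  {x | ∀ U ∈ nhds x, ν U ≠ 0}

/-- The smallest closed subgroup of `SL(2,ℝ)` containing the support of `ν`: the topological
closure of the subgroup generated by `supp ν`. -/
def Gnu (ν : Measure SL2) : Set SL2 := closure (Subgroup.closure (msupp ν) : Set SL2)


open Topology Pointwise MulAction BoundedContinuousFunction

/-!
Approximating indicators of closed sets by bounded continuous functions upgrades the invariance
of `m` to the identity `ν ∗ m = m` of measures, so `m {w} = ∫ m {M⁻¹ w} dν(M)` for every `w`.
If `m` has an atom, the atoms of maximal mass form a finite nonempty set `S`. For `w ∈ S` every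
`m {M⁻¹ w}` is at most `m {w}` while their `ν`-average is `m {w}`, so `M⁻¹ w ∈ S` for `ν`-almost
every `M`. The stabilizer of the finite set `S` is a closed subgroup, hence it contains the
support of `ν` and then all of `G_ν`.
-/

namespace MeasureTheory.Measure

section Atoms

variable {X : Type*} [MeasurableSpace X]

def maxAtoms (m : Measure X) : Set X := {w | ∀ u, m {u} ≤ m {w}}

variable [MeasurableSingletonClass X] (m : Measure X) [IsFiniteMeasure m]

lemma finite_setOf_le_measure_singleton {ε : ENNReal} (hε : ε ≠ 0) :
    {w | ε ≤ m {w}}.Finite :=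
  finite_const_le_meas_of_disjoint_iUnion m hε.bot_lt (fun w => measurableSet_singleton w)
    (fun _ _ h => Set.disjoint_singleton.2 h) (measure_ne_top m _)

lemma finite_maxAtoms {v : X} (hv : m {v} ≠ 0) : m.maxAtoms.Finite :=
  (finite_setOf_le_measure_singleton m hv).subset fun _ hw => hw v

lemma nonempty_maxAtoms {v : X} (hv : m {v} ≠ 0) : m.maxAtoms.Nonempty := by
  obtain ⟨w, hvw, hw⟩ := Set.exists_max_image _ (fun w => m {w})
    (finite_setOf_le_measure_singleton m hv) ⟨v, le_refl (m {v})⟩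
  refine ⟨w, fun u => ?_⟩
  by_cases hu : m {v} ≤ m {u}
  · exact hw u hu
  · exact (not_le.1 hu).le.trans hvw

end Atoms

section Stationary

variable {G X : Type*} [MeasurableSpace G] [MeasurableSpace X]

/-- `m` is `ν`-stationary: `ν ∗ m = m`. -/
def IsStationary [SMul G X] (m : Measure X) (ν : Measure G) : Prop :=
  (m.prod ν).map (fun p => p.2 • p.1) = m

lemma isStationary_of_integral_eq [SMul G X] [TopologicalSpace X] [BorelSpace X]
    [HasOuterApproxClosed X] [MeasurableSMul₂ G X] (m : Measure X) [IsFiniteMeasure m]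
    (ν : Measure G) [IsFiniteMeasure ν]
    (hm : ∀ f : X →ᵇ ℝ, ∫ x, f x ∂m = ∫ x, ∫ g, f (g • x) ∂ν ∂m) :
    m.IsStationary ν := by
  have hact : Measurable fun p : X × G => p.2 • p.1 := measurable_snd.smul measurable_fst
  refine ext_of_forall_integral_eq_of_IsFiniteMeasure fun f => ?_
  have hint : Integrable (fun p : X × G => f (p.2 • p.1)) (m.prod ν) :=
    (integrable_map_measure f.continuous.aestronglyMeasurable hact.aemeasurable).1
      (f.integrable _)
  rw [hm, integral_map hact.aemeasurable f.continuous.aestronglyMeasurable, integral_prod _ hint]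

variable [Group G] [MulAction G X]

lemma IsStationary.measure_singleton_eq_lintegral [MeasurableSingletonClass X]
    [MeasurableSMul₂ G X] {m : Measure X} [SFinite m] {ν : Measure G} [SFinite ν]
    (hm : m.IsStationary ν) (w : X) : m {w} = ∫⁻ g, m {g⁻¹ • w} ∂ν := by
  have hact : Measurable fun p : X × G => p.2 • p.1 := measurable_snd.smul measurable_fst
  conv_lhs => rw [← hm]
  rw [map_apply hact (measurableSet_singleton w),
    prod_apply_symm (hact (measurableSet_singleton w))]
  congr! with g
  ext x
  simp [eq_inv_smul_iff]

variable (m : Measure X) [IsFiniteMeasure m] (ν : Measure G) [IsProbabilityMeasure ν]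

lemma ae_inv_smul_mem_maxAtoms (hm : ∀ w, m {w} = ∫⁻ g, m {g⁻¹ • w} ∂ν) {w : X}
    (hw : w ∈ m.maxAtoms) : ∀ᵐ g ∂ν, g⁻¹ • w ∈ m.maxAtoms := by
  have hmax : (fun g : G => m {g⁻¹ • w}) =ᵐ[ν] fun _ => m {w} :=
    ae_eq_of_ae_le_of_lintegral_le (ae_of_all _ fun g => hw _)
      (hm w ▸ measure_ne_top m _) aemeasurable_const (by simp [← hm w])
  filter_upwards [hmax] with g hg u
  exact hg ▸ hw u

lemma ae_mem_stabilizer_maxAtoms (hm : ∀ w, m {w} = ∫⁻ g, m {g⁻¹ • w} ∂ν)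
    (hfin : m.maxAtoms.Finite) : ∀ᵐ g ∂ν, g ∈ stabilizer G m.maxAtoms := by
  filter_upwards [(eventually_all_finite hfin).2 fun w hw => ae_inv_smul_mem_maxAtoms m ν hm hw]
    with g hg
  rw [← inv_mem_iff, mem_stabilizer_set' hfin]
  exact hg

end Stationary

end MeasureTheory.Measure

lemma msupp_eq_support {G : Type*} [TopologicalSpace G] [MeasurableSpace G] (ν : Measure G) :
    msupp ν = ν.support := by
  ext x
  simp [msupp, Measure.mem_support_iff_forall, pos_iff_ne_zero]

section Stabilizer

variable {G X : Type*} [Group G] [TopologicalSpace G] [MulAction G X] [TopologicalSpace X]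
  [T1Space X] [ContinuousSMul G X]

lemma isClosed_stabilizer_of_finite {S : Set X} (hS : S.Finite) :
    IsClosed (stabilizer G S : Set G) := by
  have : (stabilizer G S : Set G) = ⋂ x ∈ S, (· • x) ⁻¹' S := by
    ext g
    simp [mem_stabilizer_set' hS]
  rw [this]
  exact isClosed_biInter fun x _ => hS.isClosed.preimage (continuous_id.smul continuous_const)

lemma closure_subgroupClosure_support_subset_stabilizer {S : Set X} (hS : S.Finite)
    [MeasurableSpace G] {ν : Measure G} (hν : ∀ᵐ g ∂ν, g ∈ stabilizer G S) :
    closure (Subgroup.closure ν.support : Set G) ⊆ stabilizer G S :=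
  closure_minimal ((Subgroup.closure_le _).2
    (Measure.support_subset_of_isClosed (isClosed_stabilizer_of_finite hS) hν))
    (isClosed_stabilizer_of_finite hS)

theorem exists_finite_stabilized_of_isStationary [MeasurableSpace G] [MeasurableSpace X]
    [MeasurableSingletonClass X] [MeasurableSMul₂ G X] {m : Measure X} [IsFiniteMeasure m]
    {ν : Measure G} [IsProbabilityMeasure ν] (hm : m.IsStationary ν) {v : X} (hv : m {v} ≠ 0) :
    ∃ S : Set X, S.Finite ∧ S.Nonempty ∧
      closure (Subgroup.closure ν.support : Set G) ⊆ stabilizer G S :=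
  ⟨m.maxAtoms, m.finite_maxAtoms hv, m.nonempty_maxAtoms hv,
    closure_subgroupClosure_support_subset_stabilizer (m.finite_maxAtoms hv)
      (Measure.ae_mem_stabilizer_maxAtoms m ν hm.measure_singleton_eq_lintegral
        (m.finite_maxAtoms hv))⟩

end Stabilizer

section ProjectiveLine

open Projectivization TopologicalSpace Matrix

local notation "E2" => EuclideanSpace ℝ (Fin 2)

lemma projAct_eq_smul (M : SL2) : projAct M = (M • ·) := rfl

lemma isOpenQuotientMap_mk' : IsOpenQuotientMap (mk' ℝ : {v : E2 // v ≠ 0} → P1) := by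
  have hq : IsQuotientMap (mk' ℝ : {v : E2 // v ≠ 0} → P1) := isQuotientMap_quot_mk
  refine ⟨hq.surjective, hq.continuous, fun U hU => ?_⟩
  have hsat : mk' ℝ ⁻¹' (mk' ℝ '' U) = ⋃ a : ℝˣ, (a • ·) ⁻¹' U := by
    ext w
    simp only [Set.mem_preimage, Set.mem_image, Set.mem_iUnion, mk'_eq_mk, mk_eq_mk_iff]
    constructor
    · rintro ⟨u, hu, a, ha⟩
      exact ⟨a, by rwa [show a • w = u from Subtype.ext ha]⟩
    · rintro ⟨a, ha⟩
      exact ⟨a • w, ha, a, rfl⟩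
  rw [← hq.isOpen_preimage, hsat]
  refine isOpen_iUnion fun a => hU.preimage ?_
  exact ((continuous_const_smul (a : ℝ)).comp continuous_subtype_val).subtype_mk _

instance : CompactSpace P1 := by
  let f : Metric.sphere (0 : E2) 1 → P1 := fun x => mk ℝ x.1 (ne_zero_of_mem_unit_sphere x)
  have hf : Continuous f :=
    isOpenQuotientMap_mk'.continuous.comp (continuous_subtype_val.subtype_mk _)
  have hsurj : Function.Surjective f := by
    intro x
    induction x using Projectivization.ind with | h v hv =>
    refine ⟨⟨‖v‖⁻¹ • v, by simp [norm_smul, hv]⟩, ?_⟩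
    exact (mk_eq_mk_iff' ℝ _ _ _ _).2 ⟨‖v‖⁻¹, rfl⟩
  exact ⟨hsurj.range_eq ▸ isCompact_range hf⟩

def lineProjection (x : P1) : E2 →L[ℝ] E2 := x.submodule.starProjection

lemma lineProjection_mk (v : E2) (hv : v ≠ 0) :
    lineProjection (mk ℝ v hv) = (‖v‖ ^ 2)⁻¹ • (innerSL ℝ v).smulRight v := by
  ext w
  simp [lineProjection, submodule_mk, Submodule.starProjection_singleton, div_eq_inv_mul, smul_smul]

lemma continuous_lineProjection : Continuous lineProjection := by
  rw [← isOpenQuotientMap_mk'.continuous_comp_iff]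
  have : lineProjection ∘ mk' ℝ = fun v : {v : E2 // v ≠ 0} =>
      (‖v.1‖ ^ 2)⁻¹ • (innerSL ℝ v.1).smulRight v.1 :=
    funext fun v => lineProjection_mk v.1 v.2
  rw [this]
  refine ((continuous_subtype_val.norm.pow 2).inv₀ fun v => by simpa using v.2).smul ?_
  exact (ContinuousLinearMap.smulRightL ℝ E2 E2).continuous₂.comp
    (((innerSL ℝ).continuous.comp continuous_subtype_val).prodMk continuous_subtype_val)

lemma injective_lineProjection : Function.Injective lineProjection := by
  intro x y h
  apply submodule_injective
  rw [← x.submodule.range_starProjection, ← y.submodule.range_starProjection]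
  exact congrArg (fun T : E2 →L[ℝ] E2 => T.range) h

lemma isEmbedding_lineProjection : IsEmbedding lineProjection :=
  (continuous_lineProjection.isClosedEmbedding injective_lineProjection).isEmbedding

instance : MetrizableSpace P1 := isEmbedding_lineProjection.metrizableSpace

instance : SecondCountableTopology P1 := isEmbedding_lineProjection.secondCountableTopology

instance : ContinuousSMul SL2 P1 := by
  refine ⟨(IsOpenQuotientMap.id.prodMap isOpenQuotientMap_mk').continuous_comp_iff.1 ?_⟩
  have hlin : Continuous fun p : SL2 × E2 => p.1 • p.2 :=
    show Continuous fun p : SL2 × E2 =>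
      WithLp.toLp 2 ((p.1 : Matrix (Fin 2) (Fin 2) ℝ) *ᵥ WithLp.ofLp p.2) by fun_prop
  exact isOpenQuotientMap_mk'.continuous.comp
    ((hlin.comp (continuous_fst.prodMk (continuous_subtype_val.comp continuous_snd))).subtype_mk _)

instance : BorelSpace P1 := ⟨rfl⟩

instance : BorelSpace SL2 := ⟨rfl⟩

end ProjectiveLine

/-- If there is no finite non-empty subset of `ℙ¹(ℝ)` invariant under all of `G_ν`, then
every `ν`-invariant probability measure `m` on `ℙ¹(ℝ)` (invariance being tested against all
bounded continuous functions) is non-atomic. -/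
theorem invariant_measure_nonatomic
    (ν : Measure SL2) [IsProbabilityMeasure ν]
    (hinv : ¬ ∃ L : Set P1, L.Finite ∧ L.Nonempty ∧ ∀ M ∈ Gnu ν, projAct M '' L = L)
    (m : Measure P1) [IsProbabilityMeasure m]
    (hm : ∀ f : P1 → ℝ, Continuous f → (∃ C : ℝ, ∀ x, |f x| ≤ C) →
      ∫ x, f x ∂m = ∫ x, (∫ M, f (projAct M x) ∂ν) ∂m) :
    ∀ v : P1, m {v} = 0 := by
  simp only [projAct_eq_smul, Set.image_smul] at hinv hm
  intro v
  by_contra hv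
  have hstationary : m.IsStationary ν :=
    Measure.isStationary_of_integral_eq m ν fun f =>
      hm f f.continuous ⟨‖f‖, f.norm_coe_le_norm⟩
  obtain ⟨S, hSfin, hSne, hS⟩ := exists_finite_stabilized_of_isStationary hstationary hv
  refine hinv ⟨S, hSfin, hSne, fun M hM => ?_⟩
  rw [Gnu, msupp_eq_support] at hM
  exact mem_stabilizer_iff.1 (hS hM)
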